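/- For every real number u > 0, f(u) − 2·D(u) = g(u), where f(u) = (1/u)(√(1+u) − 1 − log((1+√(1+u))/2)), D(u) is the derivative at u of the function u ↦ u·f(u), and g(u) = −(1/u)·log((1+√(1+u))/2). -/

import Mathlib

/-- The Biquard–Gauduchon function
`f(u) = (1/u)(√(1+u) − 1 − log((1+√(1+u))/2))`. -/
noncomputable def BGf (u : ℝ) : ℝ :=
  (1 / u) * (Real.sqrt (1 + u) - 1 - Real.log ((1 + Real.sqrt (1 + u)) / 2))

/-- The function `g(u) = −(1/u)·log((1+√(1+u))/2)` giving the curvature of the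
hyperholomorphic line bundle on the cotangent bundle of a Hermitian symmetric space. -/
noncomputable def BGg (u : ℝ) : ℝ :=
  -(1 / u) * Real.log ((1 + Real.sqrt (1 + u)) / 2)

/-!
With `s = √(1+u)`, the function `u·f(u) = s − 1 − log((1+s)/2)` has derivative
`(1 − 1/(1+s))·ds/du = (s/(1+s))·(1/(2s)) = 1/(2(1+s))`, while
`f(u) − g(u) = (s − 1)/u = (s − 1)/(s² − 1) = 1/(1+s)`.
-/

open Real

/-- Also at `v = 0`: both sides vanish there, the left one because `1 / 0 = 0`. -/
theorem mul_BGf (v : ℝ) : v * BGf v = √(1 + v) - 1 - log ((1 + √(1 + v)) / 2) := by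
  rcases eq_or_ne v 0 with rfl | hv
  · simp
  · rw [BGf, ← mul_assoc, mul_one_div_cancel hv, one_mul]

theorem hasDerivAt_mul_BGf {u : ℝ} (hu : -1 < u) :
    HasDerivAt (fun v => v * BGf v) ((1 + √(1 + u))⁻¹ / 2) u := by
  have hs : 0 < √(1 + u) := sqrt_pos.mpr (by linarith)
  have hsqrt : HasDerivAt (fun v => √(1 + v)) (1 / (2 * √(1 + u))) u := by
    simpa using ((hasDerivAt_id u).const_add 1).sqrt (by simp only [id]; linarith)
  have hlog := ((hsqrt.const_add 1).div_const 2).log (by positivity)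
  simp_rw [mul_BGf]
  refine ((hsqrt.sub_const 1).sub hlog).congr_deriv ?_
  field_simp
  ring

theorem BGf_sub_BGg {u : ℝ} (hu : -1 ≤ u) (hu0 : u ≠ 0) :
    BGf u - BGg u = (1 + √(1 + u))⁻¹ := by
  have hsq : √(1 + u) ^ 2 = 1 + u := sq_sqrt (by linarith)
  rw [BGf, BGg]
  field_simp
  linear_combination hsq

/-- For `u > 0`, if `D` is the derivative at `u` of `u ↦ u·f(u)`, then
`f(u) − 2·D = g(u)`. -/
theorem BGf_sub_two_mul_deriv (u : ℝ) (hu : 0 < u) (D : ℝ)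
    (hD : HasDerivAt (fun v : ℝ => v * BGf v) D u) :
    BGf u - 2 * D = BGg u := by
  rw [hD.unique (hasDerivAt_mul_BGf (by linarith))]
  linarith [BGf_sub_BGg (by linarith) hu.ne']
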